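/- A set s is a level if and only if s is the set of all sets of rank less than rank(s); that is, s is a level iff for all x, x ∈ s ↔ rank(x) < rank(s). -/

import Mathlib

def pot (a : ZFSet) : ZFSet :=
  ZFSet.sep (fun x => ∃ c ∈ a, x ⊆ c) (ZFSet.powerset (ZFSet.sUnion a))

def Potent (a : ZFSet) : Prop := ∀ x, (∃ c, x ⊆ c ∧ c ∈ a) → x ∈ a

def IsHistory (h : ZFSet) : Prop := ∀ x ∈ h, x = pot (x ∩ h)

def IsLevel (s : ZFSet) : Prop := ∃ h, IsHistory h ∧ s = pot h

/-! A level is `pot h` for a history `h` all of whose members are themselves levels (by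
`∈`-induction, since `x = pot (x ∩ h)`), and `pot` of a set of sets of the form `V_α` is again
such a set. Conversely, if `s = V_{rank s}` then every `y ∈ s` lies below some
`V_{rank y} = {z ∈ s | rank z < rank y} ∈ s`, so `s = pot h` for the history
`h = {x ∈ s | x = V_{rank x}}`. -/

open ZFSet

/-- `s` is `V_{rank s}`. -/
def IsRankSegment (s : ZFSet) : Prop := ∀ x : ZFSet, x ∈ s ↔ x.rank < s.rank

@[simp]
theorem mem_pot {a x : ZFSet} : x ∈ pot a ↔ ∃ c ∈ a, x ⊆ c := by
  refine mem_sep.trans ⟨And.right, fun hx => ⟨mem_powerset.2 fun w hw => ?_, hx⟩⟩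
  obtain ⟨c, hc, hxc⟩ := hx
  exact mem_sUnion.2 ⟨c, hc, hxc hw⟩

theorem rank_lt_of_subset_mem {x c a : ZFSet} (hxc : x ⊆ c) (hc : c ∈ a) :
    x.rank < a.rank :=
  (rank_mono hxc).trans_lt (rank_lt_of_mem hc)

theorem rank_pot_le (a : ZFSet) : (pot a).rank ≤ a.rank :=
  rank_le_iff.2 fun _ hy =>
    let ⟨_, hc, hyc⟩ := mem_pot.1 hy
    rank_lt_of_subset_mem hyc hc

theorem isRankSegment_pot {a : ZFSet} (ha : ∀ d ∈ a, IsRankSegment d) :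
    IsRankSegment (pot a) := by
  refine fun x => ⟨rank_lt_of_mem, fun hx => ?_⟩
  obtain ⟨d, hd, hxd⟩ := lt_rank_iff.1 (hx.trans_le (rank_pot_le a))
  exact mem_pot.2 ⟨d, hd, fun w hw => (ha d hd w).2 ((rank_lt_of_mem hw).trans_le hxd)⟩

namespace IsRankSegment

variable {s : ZFSet}

theorem subset_of_mem (hs : IsRankSegment s) {x : ZFSet} (hx : x ∈ s) : x ⊆ s :=
  fun _ hz => (hs _).2 ((rank_lt_of_mem hz).trans ((hs x).1 hx))

theorem exists_superset_of_rank_lt (hs : IsRankSegment s) {y : ZFSet} (hy : y.rank < s.rank) :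
    ∃ c ∈ s, IsRankSegment c ∧ y ⊆ c := by
  set c := s.sep fun z => z.rank < y.rank
  have mem_c : ∀ z, z ∈ c ↔ z.rank < y.rank := fun z =>
    mem_sep.trans ⟨And.right, fun hz => ⟨(hs z).2 (hz.trans hy), hz⟩⟩
  have subset_c : y ⊆ c := fun w hw => (mem_c w).2 (rank_lt_of_mem hw)
  have rank_c : c.rank = y.rank :=
    (rank_le_iff.2 fun z hz => (mem_c z).1 hz).antisymm (rank_mono subset_c)
  exact ⟨c, (hs c).2 (rank_c ▸ hy), fun z => by rw [mem_c, rank_c], subset_c⟩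

theorem eq_pot_sep (hs : IsRankSegment s) : s = pot (s.sep IsRankSegment) := by
  ext y
  constructor
  · intro hy
    obtain ⟨c, hcs, hc, hyc⟩ := hs.exists_superset_of_rank_lt ((hs y).1 hy)
    exact mem_pot.2 ⟨c, mem_sep.2 ⟨hcs, hc⟩, hyc⟩
  · intro hy
    obtain ⟨c, hc, hyc⟩ := mem_pot.1 hy
    exact (hs y).2 (rank_lt_of_subset_mem hyc (mem_sep.1 hc).1)

theorem isHistory_sep (hs : IsRankSegment s) : IsHistory (s.sep IsRankSegment) := by
  intro x hx
  obtain ⟨hxs, hx⟩ := mem_sep.1 hx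
  have : x ∩ s.sep IsRankSegment = x.sep IsRankSegment := by
    ext z
    simp only [mem_inter, mem_sep]
    exact ⟨fun h => ⟨h.1, h.2.2⟩, fun h => ⟨h.1, hs.subset_of_mem hxs h.1, h.2⟩⟩
  rw [this]
  exact hx.eq_pot_sep

end IsRankSegment

theorem IsHistory.isRankSegment_of_mem {h : ZFSet} (hh : IsHistory h) {x : ZFSet} :
    x ∈ h → IsRankSegment x := by
  induction x using inductionOn with
  | _ x ih =>
    intro hx
    rw [hh x hx]
    exact isRankSegment_pot fun d hd => ih d (mem_inter.1 hd).1 (mem_inter.1 hd).2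

theorem stmt16 (s : ZFSet) :
    IsLevel s ↔ ∀ x : ZFSet, x ∈ s ↔ x.rank < s.rank := by
  constructor
  · rintro ⟨h, hh, rfl⟩
    exact isRankSegment_pot fun _ => hh.isRankSegment_of_mem
  · intro hs
    exact ⟨_, IsRankSegment.isHistory_sep hs, IsRankSegment.eq_pot_sep hs⟩
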